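/- Let C be a self-dual linear code over R = Z4 + uZ4 of length n such that nu(C) is self-orthogonal over Z4 (where nu(a+ub) = b). Then the Gray image phi(C) is a self-dual Z4-code of length 2n. -/

import Mathlib

/-!
Expanding the products gives `⟨φ x, φ y⟩ = (x·y)₀ + (x·y)₁ + 2 ν(x)·ν(y)`, so `φ(C)` is
self-orthogonal. For maximality compare with the bijection `ψ(a + u b) = (a - b, b)`, which
satisfies `⟨ψ x, φ y⟩ = (x·y)₁`. Since `C` is closed under multiplication by `u` and
`(x·u y)₁ = (x·y)₀`, every vector orthogonal to `φ(C)` is `ψ x` with `x ∈ C^⊥ = C`; hence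
`|φ(C)^⊥| ≤ |C| = |φ(C)|`.
-/

open TrivSqZeroExt

/-- The Gray map `φ : R^n → Z4^{2n}`, `φ(a + u b) = (b, a + b)` coordinatewise. -/
def gray {n : ℕ} (x : Fin n → DualNumber (ZMod 4)) : Fin n ⊕ Fin n → ZMod 4 :=
  Sum.elim (fun i => (x i).snd) (fun i => (x i).fst + (x i).snd)

def euclideanDual {ι A : Type*} [Fintype ι] [CommRing A] (S : Set (ι → A)) : Set (ι → A) :=
  {z | ∀ w ∈ S, ∑ j, z j * w j = 0}

lemma DualNumber.snd_eps_mul {R : Type*} [Semiring R] (x : DualNumber R) :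
    (DualNumber.eps * x).snd = x.fst := by
  simp

section Gray

variable {n : ℕ}

lemma gray_injective : Function.Injective (gray (n := n)) := by
  intro x y h
  funext i
  have h₁ := congrFun h (Sum.inl i)
  have h₂ := congrFun h (Sum.inr i)
  simp only [gray, Sum.elim_inl, Sum.elim_inr] at h₁ h₂
  ext
  · simpa [h₁] using h₂
  · exact h₁

lemma sum_gray_mul_gray (x y : Fin n → DualNumber (ZMod 4)) :
    ∑ j, gray x j * gray y j
      = (∑ i, x i * y i).fst + (∑ i, x i * y i).snd + 2 * ∑ i, (x i).snd * (y i).snd := by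
  simp only [Fintype.sum_sum_type, gray, Sum.elim_inl, Sum.elim_inr, fst_sum, snd_sum,
    fst_mul, DualNumber.snd_mul, Finset.mul_sum, ← Finset.sum_add_distrib]
  exact Finset.sum_congr rfl fun i _ => by ring

def twistedGray (x : Fin n → DualNumber (ZMod 4)) : Fin n ⊕ Fin n → ZMod 4 :=
  Sum.elim (fun i => (x i).fst - (x i).snd) (fun i => (x i).snd)

lemma twistedGray_bijective : Function.Bijective (twistedGray (n := n)) := by
  refine ⟨fun x y h => funext fun i => ?_,
    fun z => ⟨fun i => (z (.inl i) + z (.inr i), z (.inr i)), ?_⟩⟩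
  · have h₁ := congrFun h (Sum.inl i)
    have h₂ := congrFun h (Sum.inr i)
    simp only [twistedGray, Sum.elim_inl, Sum.elim_inr] at h₁ h₂
    ext
    · simpa [h₂] using h₁
    · exact h₂
  · funext j
    cases j <;> simp [twistedGray]

lemma sum_twistedGray_mul_gray (x y : Fin n → DualNumber (ZMod 4)) :
    ∑ j, twistedGray x j * gray y j = (∑ i, x i * y i).snd := by
  simp only [Fintype.sum_sum_type, gray, twistedGray, Sum.elim_inl, Sum.elim_inr, snd_sum,
    DualNumber.snd_mul, ← Finset.sum_add_distrib]
  exact Finset.sum_congr rfl fun i _ => by ring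

lemma gray_image_subset_euclideanDual {C : Set (Fin n → DualNumber (ZMod 4))}
    (hC : C ⊆ euclideanDual C)
    (hnu : ∀ x ∈ C, ∀ y ∈ C, ∑ i, (x i).snd * (y i).snd = (0 : ZMod 4)) :
    gray '' C ⊆ euclideanDual (gray '' C) := by
  rintro _ ⟨x, hx, rfl⟩ _ ⟨y, hy, rfl⟩
  rw [sum_gray_mul_gray, hC hx y hy, hnu x hx y hy]
  simp

lemma euclideanDual_gray_image_subset
    {C : Submodule (DualNumber (ZMod 4)) (Fin n → DualNumber (ZMod 4))}
    (hC : euclideanDual (C : Set (Fin n → DualNumber (ZMod 4))) ⊆ C) :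
    euclideanDual (gray '' (C : Set (Fin n → DualNumber (ZMod 4)))) ⊆ twistedGray '' C := by
  intro z hz
  obtain ⟨x, rfl⟩ := twistedGray_bijective.surjective z
  refine ⟨x, hC fun y hy => ?_, rfl⟩
  have hsnd := hz _ ⟨y, hy, rfl⟩
  have hfst := hz _ ⟨DualNumber.eps • y, C.smul_mem _ hy, rfl⟩
  rw [sum_twistedGray_mul_gray] at hsnd hfst
  simp only [Pi.smul_apply, smul_eq_mul, mul_left_comm (x _), ← Finset.mul_sum,
    DualNumber.snd_eps_mul] at hfst
  exact TrivSqZeroExt.ext hfst hsnd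

end Gray

/-- if `C ⊆ R^n` is self-dual and `ν(C)` is self-orthogonal over `Z4`
(with `ν(a+ub) = b`), then the Gray image `φ(C)` is a self-dual `Z4`-code of length `2n`. -/
theorem stmt_15 (n : ℕ) (C : Submodule (DualNumber (ZMod 4)) (Fin n → DualNumber (ZMod 4)))
    (hC : (C : Set (Fin n → DualNumber (ZMod 4))) =
      {y | ∀ x ∈ C, ∑ i, y i * x i = 0})
    (hnu : ∀ x ∈ C, ∀ y ∈ C, ∑ i, (x i).snd * (y i).snd = (0 : ZMod 4)) :
    gray '' (C : Set (Fin n → DualNumber (ZMod 4))) =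
      {z : Fin n ⊕ Fin n → ZMod 4 |
        ∀ w ∈ gray '' (C : Set (Fin n → DualNumber (ZMod 4))), ∑ j, z j * w j = 0} := by
  refine Set.eq_of_subset_of_ncard_le (gray_image_subset_euclideanDual hC.le hnu) ?_
    (Set.toFinite _)
  calc (euclideanDual (gray '' (C : Set (Fin n → DualNumber (ZMod 4))))).ncard
      ≤ (twistedGray '' (C : Set (Fin n → DualNumber (ZMod 4)))).ncard :=
        Set.ncard_le_ncard (euclideanDual_gray_image_subset hC.ge)
    _ = (gray '' (C : Set (Fin n → DualNumber (ZMod 4)))).ncard := by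
        rw [Set.ncard_image_of_injective _ twistedGray_bijective.injective,
          Set.ncard_image_of_injective _ gray_injective]
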